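/- Let R be a right V-ring such that for every simple right R-module S, no cyclic right R-module contains an infinite direct sum of copies of S. Then for every simple right R-module S, the injective hull of any direct sum of copies of S is semisimple; consequently every simple right R-module is Σ-injective. -/

import Mathlib

universe u

open MulOpposite

/-- A right `A`-module `M` is Σ-injective if the direct sum of any family of copies of `M`
is injective. -/
def IsSigmaInjective (A : Type u) [Ring A] (M : Type u) [AddCommGroup M] [Module A M] : Prop :=
  ∀ ι : Type u, Module.Injective A (ι →₀ M)

/-- `R` is a right V-ring: every simple right `R`-module is injective.
Right `R`-modules are modules over `Rᵐᵒᵖ`. -/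
def IsRightVRing (R : Type u) [Ring R] : Prop :=
  ∀ (S : Type u) [AddCommGroup S] [Module Rᵐᵒᵖ S],
    IsSimpleModule Rᵐᵒᵖ S → Module.Injective Rᵐᵒᵖ S

/-!
Let `S` be simple and injective and let `τ →₀ S` embed essentially into `E`. For `x ∈ E`, the
part `W` of the cyclic module `A ∙ x` lying in the image is semisimple with every simple
submodule isomorphic to `S`; since `A ∙ x` contains no infinite direct sum of copies of `S`, `W`
is a finite direct sum of copies of `S`, hence injective. An injective essential submodule is
everything, so `x` lies in the image and `E ≅ τ →₀ S` is semisimple.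

Thus `τ →₀ S` has no proper essential extension. Embed it into an injective module `Q` and choose
`K` maximal among the submodules meeting its image `P` trivially: the image of `P` in `Q ⧸ K` is
essential, so `P ⊕ K = Q`, and `P`, a direct summand of `Q`, is injective.
-/

theorem exists_maximal_disjoint {α : Type*} [CompleteLattice α] [IsCompactlyGenerated α]
    (a : α) : ∃ b, Maximal (Disjoint a) b := by
  obtain ⟨b, -, hb⟩ := zorn_le_nonempty₀ {b | Disjoint a b}
    (fun c hcs hchain _ _ => ⟨sSup c,
      (hchain.directedOn.disjoint_sSup_right (a := a)).2 hcs, fun _ => le_sSup⟩)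
    ⊥ disjoint_bot_right
  exact ⟨b, hb⟩

namespace Submodule

variable {A M : Type*} [Ring A] [AddCommGroup M] [Module A M]

def IsEssential (N : Submodule A M) : Prop := ∀ K : Submodule A M, K ≠ ⊥ → N ⊓ K ≠ ⊥

theorem IsEssential.comap_subtype {N : Submodule A M} (hN : N.IsEssential)
    (C : Submodule A M) : (N.comap C.subtype).IsEssential := by
  intro K hK hNK
  have hCK : C ⊓ N ⊓ K.map C.subtype = ⊥ := by
    simpa [map_inf _ C.injective_subtype] using congrArg (map C.subtype) hNK
  refine hN (K.map C.subtype) (fun h => hK ?_) ?_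
  · exact map_injective_of_injective C.injective_subtype (h.trans (map_bot _).symm)
  · rwa [inf_comm C, inf_assoc, inf_eq_right.mpr (C.map_subtype_le K)] at hCK

theorem isEssential_map_mkQ_of_maximal_disjoint {P K : Submodule A M}
    (hK : Maximal (Disjoint P) K) : (P.map K.mkQ).IsEssential := by
  intro L hL hPL
  set T := L.comap K.mkQ
  have hKT : K ≤ T := by
    simpa [T, ker_mkQ] using comap_mono (f := K.mkQ) bot_le
  have hPT : Disjoint P T := by
    have : (K ⊔ P) ⊓ T = K := by
      rw [← comap_map_mkQ, ← comap_inf, hPL, comap_bot,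
        ker_mkQ]
    rw [disjoint_iff, ← le_bot_iff, ← hK.1.eq_bot]
    exact le_inf inf_le_left (this ▸ inf_le_inf_right T le_sup_right)
  apply hL
  rw [← map_comap_eq_of_surjective K.mkQ_surjective L, eq_bot_iff,
    map_le_iff_le_comap, comap_bot, ker_mkQ]
  exact hK.2 hPT hKT

end Submodule

section Injective

variable {A : Type u} [Ring A]

theorem Module.Injective.of_retraction {M N : Type u} [AddCommGroup M] [Module A M]
    [AddCommGroup N] [Module A N] [Module.Injective A M] (i : N →ₗ[A] M) (r : M →ₗ[A] N)
    (hri : r ∘ₗ i = LinearMap.id) : Module.Injective A N where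
  out X Y _ _ _ _ f hf g := by
    obtain ⟨h, hh⟩ := Module.Injective.extension_property A M X Y f hf (i ∘ₗ g)
    refine ⟨r ∘ₗ h, fun x => ?_⟩
    simpa [← LinearMap.comp_apply h f, hh] using LinearMap.congr_fun hri (g x)

theorem Module.Injective.of_linearEquiv {M N : Type u} [AddCommGroup M] [Module A M]
    [AddCommGroup N] [Module A N] [Module.Injective A M] (e : M ≃ₗ[A] N) :
    Module.Injective A N :=
  .of_retraction e.symm.toLinearMap e.toLinearMap (by ext; simp)

theorem Submodule.eq_top_of_isEssential {M : Type u} [AddCommGroup M] [Module A M]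
    (W : Submodule A M) [Module.Injective A W] (hW : W.IsEssential) : W = ⊤ := by
  obtain ⟨r, hr⟩ := Module.Injective.extension_property A W W M W.subtype W.injective_subtype
    LinearMap.id
  have hr' (w : W) : r w = w := LinearMap.congr_fun hr w
  have hker : LinearMap.ker r = ⊥ := by
    by_contra hne
    refine hW _ hne (eq_bot_iff.mpr fun z ⟨hzW, hzr⟩ => ?_)
    have : (⟨z, hzW⟩ : W) = 0 := (hr' ⟨z, hzW⟩).symm.trans hzr
    simpa using congrArg Subtype.val this
  refine eq_top_iff.mpr fun x _ => ?_
  have : (r x : M) = x := LinearMap.ker_eq_bot.mp hker (hr' (r x))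
  exact this ▸ (r x).2

end Injective

section Isotypic

variable {A : Type u} [Ring A] {S : Type u} [AddCommGroup S] [Module A S]

def HasInfiniteDirectSumOf (A S M : Type*) [Ring A] [AddCommGroup S] [Module A S]
    [AddCommGroup M] [Module A M] : Prop :=
  ∃ N : ℕ → Submodule A M, iSupIndep N ∧ ∀ i, Nonempty (N i ≃ₗ[A] S)

theorem isIsotypicOfType_finsupp [IsSimpleModule A S] (ι : Type*) :
    IsIsotypicOfType A (ι →₀ S) S := by
  refine .of_isotypicComponent_eq_top (eq_top_iff.mpr ?_)
  rw [← Finsupp.iSup_lsingle_range]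
  exact iSup_le fun j => le_sSup ⟨(LinearEquiv.ofInjective _ (Finsupp.single_injective j)).symm⟩

theorem finite_of_injective_finsupp {M : Type*} [AddCommGroup M] [Module A M]
    (hM : ¬HasInfiniteDirectSumOf A S M)
    {ι : Type*} (g : (ι →₀ S) →ₗ[A] M) (hg : Function.Injective g) : Finite ι := by
  by_contra hfin
  have := not_finite_iff_infinite.mp hfin
  let e := Infinite.natEmbedding ι
  refine hM ⟨fun n => (LinearMap.range (Finsupp.lsingle (e n))).map g,
    g.iSupIndep_map hg ((iSupIndep_range_lsingle ι A S).comp e.injective), fun n => ?_⟩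
  exact ⟨(Submodule.equivMapOfInjective g hg _).symm.trans
    (LinearEquiv.ofInjective _ (Finsupp.single_injective (e n))).symm⟩

theorem Module.Injective.of_isIsotypicOfType [Module.Injective A S] {W M : Type u}
    [AddCommGroup W] [Module A W] [IsSemisimpleModule A W] [AddCommGroup M] [Module A M]
    (hW : IsIsotypicOfType A W S)
    (hM : ¬HasInfiniteDirectSumOf A S M)
    (g : W →ₗ[A] M) (hg : Function.Injective g) : Module.Injective A W := by
  obtain ⟨ι, ⟨e⟩⟩ := hW.linearEquiv_finsupp
  have : Finite ι := finite_of_injective_finsupp hM (g ∘ₗ e.symm.toLinearMap)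
    (hg.comp e.symm.injective)
  exact .of_linearEquiv (e.trans (Finsupp.linearEquivFunOnFinite A S ι)).symm

end Isotypic

theorem range_eq_top_of_isEssential {A : Type u} [Ring A] {S : Type u} [AddCommGroup S]
    [Module A S] [IsSimpleModule A S] [Module.Injective A S]
    (hqfd : ∀ (C : Type u) [AddCommGroup C] [Module A C], Module.IsPrincipal A C →
      ¬HasInfiniteDirectSumOf A S C)
    {τ E : Type u} [AddCommGroup E] [Module A E] (f : (τ →₀ S) →ₗ[A] E)
    (hf : Function.Injective f) (hess : (LinearMap.range f).IsEssential) :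
    LinearMap.range f = ⊤ := by
  refine eq_top_iff.mpr fun x _ => ?_
  set C := Submodule.span A {x}
  set W := (LinearMap.range f).comap C.subtype
  let g : W →ₗ[A] τ →₀ S :=
    (LinearEquiv.ofInjective f hf).symm.toLinearMap ∘ₗ C.subtype.restrict fun _ h => h
  have hg : Function.Injective g := by simp [g]
  have : IsSemisimpleModule A W := .of_injective g hg
  have : Module.Injective A W :=
    .of_isIsotypicOfType ((isIsotypicOfType_finsupp τ).of_injective g hg)
      (hqfd C (Module.isPrincipal_submodule_iff.mpr ⟨x, rfl⟩)) W.subtype W.injective_subtype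
  have hW : W = ⊤ := W.eq_top_of_isEssential (hess.comap_subtype C)
  exact (hW ▸ Submodule.mem_top : (⟨x, Submodule.mem_span_singleton_self x⟩ : C) ∈ W)

theorem Module.Injective.of_forall_isEssential {A : Type u} [Ring A] {M : Type u}
    [AddCommGroup M] [Module A M]
    (h : ∀ (E : Type u) [AddCommGroup E] [Module A E] (f : M →ₗ[A] E),
      Function.Injective f → (LinearMap.range f).IsEssential → LinearMap.range f = ⊤) :
    Module.Injective A M := by
  let Q := CategoryTheory.Injective.under (ModuleCat.of A M)
  have := CategoryTheory.Injective.injective_under (ModuleCat.of A M)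
  have : Module.Injective A Q := Module.injective_module_of_injective_object A Q
  let g : M →ₗ[A] Q := (CategoryTheory.Injective.ι (ModuleCat.of A M)).hom
  have hg : Function.Injective g := (ModuleCat.mono_iff_injective _).mp inferInstance
  set P := LinearMap.range g
  obtain ⟨K, hK⟩ := exists_maximal_disjoint P
  have hf : Function.Injective (K.mkQ ∘ₗ g) := by
    rw [← LinearMap.ker_eq_bot, LinearMap.ker_comp, Submodule.ker_mkQ, eq_bot_iff]
    intro m hm
    have : g m ∈ P ⊓ K := ⟨LinearMap.mem_range_self g m, hm⟩
    rw [hK.1.eq_bot, Submodule.mem_bot] at this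
    exact (Submodule.mem_bot A).mpr (hg (this.trans (map_zero g).symm))
  have hPK : P ⊔ K = ⊤ := by
    have := h _ (K.mkQ ∘ₗ g) hf (by
      simpa [LinearMap.range_comp] using Submodule.isEssential_map_mkQ_of_maximal_disjoint hK)
    rw [LinearMap.range_comp] at this
    simpa [Submodule.comap_map_mkQ, sup_comm] using congrArg (Submodule.comap K.mkQ) this
  have hc : IsCompl P K := ⟨hK.1, codisjoint_iff.mpr hPK⟩
  have : Module.Injective A P :=
    .of_retraction P.subtype (P.projectionOnto K hc) (P.projectionOnto_comp_subtype hc)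
  exact .of_linearEquiv (LinearEquiv.ofInjective g hg).symm

/-- Let `R` be a right V-ring such that for every simple right `R`-module `S`, no cyclic
right `R`-module contains an infinite direct sum of copies of `S`.  Then for every simple
right `R`-module `S`, any injective hull of any direct sum of copies of `S` is semisimple;
consequently every simple right `R`-module is Σ-injective. -/
theorem semisimple_hull_and_sigmaInjective_of_rightV_qfd (R : Type u) [Ring R]
    (hV : IsRightVRing R)
    (hqfd : ∀ (S : Type u) [AddCommGroup S] [Module Rᵐᵒᵖ S], IsSimpleModule Rᵐᵒᵖ S →
      ∀ (C : Type u) [AddCommGroup C] [Module Rᵐᵒᵖ C], (⊤ : Submodule Rᵐᵒᵖ C).IsPrincipal →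
        ∀ N : ℕ → Submodule Rᵐᵒᵖ C, iSupIndep N →
          (∀ i, Nonempty ((N i) ≃ₗ[Rᵐᵒᵖ] S)) → False) :
    (∀ (S : Type u) [AddCommGroup S] [Module Rᵐᵒᵖ S], IsSimpleModule Rᵐᵒᵖ S →
      ∀ (τ : Type u) (E : Type u) [AddCommGroup E] [Module Rᵐᵒᵖ E],
        Module.Injective Rᵐᵒᵖ E →
        ∀ f : (τ →₀ S) →ₗ[Rᵐᵒᵖ] E, Function.Injective f →
          (∀ K : Submodule Rᵐᵒᵖ E, K ≠ ⊥ → LinearMap.range f ⊓ K ≠ ⊥) →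
          IsSemisimpleModule Rᵐᵒᵖ E) ∧
    (∀ (S : Type u) [AddCommGroup S] [Module Rᵐᵒᵖ S], IsSimpleModule Rᵐᵒᵖ S →
      IsSigmaInjective Rᵐᵒᵖ S) := by
  have essential_hull_trivial (S : Type u) [AddCommGroup S] [Module Rᵐᵒᵖ S]
      (hS : IsSimpleModule Rᵐᵒᵖ S) (τ E : Type u) [AddCommGroup E] [Module Rᵐᵒᵖ E]
      (f : (τ →₀ S) →ₗ[Rᵐᵒᵖ] E) (hf : Function.Injective f)
      (hess : (LinearMap.range f).IsEssential) : LinearMap.range f = ⊤ :=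
    have := hV S hS
    range_eq_top_of_isEssential (fun C _ _ hC ⟨N, hN, hNS⟩ => hqfd S hS C hC N hN hNS) f hf hess
  refine ⟨fun S _ _ hS τ E _ _ _ f hf hess => ?_, fun S _ _ hS τ => ?_⟩
  · have hbij : Function.Bijective f :=
      ⟨hf, LinearMap.range_eq_top.mp (essential_hull_trivial S hS τ E f hf hess)⟩
    exact .congr (LinearEquiv.ofBijective f hbij).symm
  · exact .of_forall_isEssential (essential_hull_trivial S hS τ)
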